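/- For all reals α, β > 0, c > 0 and d with |d| < c, one has ∫₀^∞ u^{β−1} e^{−c·u} ₁F₁(α; 1; d·u) du = Γ(β) · c^{−β} · ₂F₁(α, β; 1; d/c). -/

import Mathlib

open Real MeasureTheory

/-- Rising factorial (Pochhammer symbol) `(a)_k` for a real `a`. -/
noncomputable def risingFactorial (a : ℝ) (k : ℕ) : ℝ :=
  ∏ i ∈ Finset.range k, (a + i)

/-- The Kummer confluent hypergeometric function `₁F₁(a; 1; z)`. -/
noncomputable def kummer1F1 (a z : ℝ) : ℝ :=
  ∑' k : ℕ, risingFactorial a k / (Nat.factorial k : ℝ) ^ 2 * z ^ k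

/-- The Gauss hypergeometric function `₂F₁(a, b; 1; z)`. -/
noncomputable def gauss2F1 (a b z : ℝ) : ℝ :=
  ∑' k : ℕ, risingFactorial a k * risingFactorial b k / (Nat.factorial k : ℝ) ^ 2 * z ^ k

/-!
Expand `₁F₁(α; 1; d u)` termwise. Each term is a Gamma integral,
`∫₀^∞ u^(β+k-1) e^(-c u) du = Γ(β + k) c^(-β-k) = Γ(β) (β)_k c^(-β-k)`, which turns the `k`-th
coefficient `(α)_k / (k!)²` of `₁F₁` into the `k`-th term of `Γ(β) c^(-β) ₂F₁(α, β; 1; d/c)`.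
Summation and integration may be swapped because the integrals of the absolute values of the terms
form the series of absolute values of that `₂F₁` series, which converges since `|d/c| < 1` lies
inside its radius of convergence `1`.
-/

open Set Nat FormalMultilinearSeries

lemma risingFactorial_succ (a : ℝ) (k : ℕ) :
    risingFactorial a (k + 1) = risingFactorial a k * (a + k) :=
  Finset.prod_range_succ _ _

lemma risingFactorial_pos {a : ℝ} (ha : 0 < a) (k : ℕ) : 0 < risingFactorial a k :=
  Finset.prod_pos fun _ _ => by positivity

lemma risingFactorial_eq_eval_ascPochhammer (a : ℝ) (k : ℕ) :
    risingFactorial a k = (ascPochhammer ℝ k).eval a := by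
  induction k with
  | zero => simp [risingFactorial]
  | succ k ih => rw [risingFactorial_succ, ih, ascPochhammer_succ_eval]

lemma abs_risingFactorial_le (a : ℝ) (k : ℕ) :
    |risingFactorial a k| ≤ risingFactorial (|a| + 1) k := by
  rw [risingFactorial, risingFactorial, Finset.abs_prod]
  refine Finset.prod_le_prod (fun _ _ => abs_nonneg _) fun i _ => ?_
  calc |a + i| ≤ |a| + |(i : ℝ)| := abs_add_le _ _
    _ ≤ |a| + 1 + i := by rw [Nat.abs_cast]; linarith

lemma Gamma_add_natCast_eq_mul_risingFactorial {b : ℝ} (hb : ∀ n : ℕ, b + n ≠ 0) (k : ℕ) :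
    Gamma (b + k) = Gamma b * risingFactorial b k := by
  induction k with
  | zero => simp [risingFactorial]
  | succ k ih =>
    rw [Nat.cast_succ, ← add_assoc, Real.Gamma_add_one (hb k), ih, risingFactorial_succ]
    ring

lemma summable_gauss2F1_series_of_pos {a b x : ℝ} (ha : 0 < a) (hb : 0 < b) (hx₀ : 0 ≤ x)
    (hx : x < 1) :
    Summable fun k : ℕ => risingFactorial a k * risingFactorial b k / (k ! : ℝ) ^ 2 * x ^ k := by
  set p := ordinaryHypergeometricSeries ℝ a b (1 : ℝ)
  have hp : p.radius = 1 := ordinaryHypergeometricSeries_radius_eq_one ℝ _ _ _ fun n => by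
    refine ⟨?_, ?_, ?_⟩ <;> linarith [n.cast_nonneg (α := ℝ)]
  have hxp : (x.toNNReal : ENNReal) < p.radius := by
    rw [hp, ENNReal.coe_lt_one_iff, Real.toNNReal_lt_one]
    exact hx
  refine (p.summable_norm_mul_pow hxp).congr fun k => ?_
  have hfac : (0 : ℝ) < k ! := by positivity
  simp only [p, ordinaryHypergeometricSeries, ofScalars_norm, ordinaryHypergeometricCoefficient,
    ascPochhammer_eval_one, ← risingFactorial_eq_eval_ascPochhammer, Real.coe_toNNReal _ hx₀,
    Real.norm_eq_abs, abs_mul, abs_inv, abs_of_pos hfac, abs_of_pos (risingFactorial_pos ha k),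
    abs_of_pos (risingFactorial_pos hb k)]
  field_simp

/-- Comparison with the positive parameters `|a| + 1`, `|b| + 1` avoids the cases where `a` or `b`
is a nonpositive integer, which the radius-of-convergence theorem excludes. -/
lemma summable_norm_gauss2F1_series (a b : ℝ) {x : ℝ} (hx : |x| < 1) :
    Summable fun k : ℕ => ‖risingFactorial a k * risingFactorial b k / (k ! : ℝ) ^ 2 * x ^ k‖ := by
  refine (summable_gauss2F1_series_of_pos (a := |a| + 1) (b := |b| + 1) (by positivity)
    (by positivity) (abs_nonneg x) hx).of_nonneg_of_le (fun _ => norm_nonneg _) fun k => ?_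
  rw [Real.norm_eq_abs, abs_mul, abs_div, abs_mul, abs_pow, abs_pow, Nat.abs_cast]
  gcongr
  · exact (abs_nonneg _).trans (abs_risingFactorial_le a k)
  · exact abs_risingFactorial_le a k
  · exact abs_risingFactorial_le b k

lemma rpow_mul_exp_neg_mul_mul_pow_eqOn (β c r d : ℝ) (k : ℕ) :
    EqOn (fun u : ℝ => u ^ (β - 1) * exp (-(c * u)) * (r * (d * u) ^ k))
      (fun u => r * d ^ k * (u ^ (β + k - 1) * exp (-(c * u)))) (Ioi 0) := by
  intro u (hu : 0 < u)
  simp only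
  rw [show β + k - 1 = β - 1 + k by ring, rpow_add hu, rpow_natCast]
  ring

lemma integrableOn_rpow_mul_exp_neg_mul_mul_pow {β c : ℝ} (hβ : 0 < β) (hc : 0 < c)
    (r d : ℝ) (k : ℕ) :
    IntegrableOn (fun u : ℝ => u ^ (β - 1) * exp (-(c * u)) * (r * (d * u) ^ k)) (Ioi 0) := by
  have hexp : IntegrableOn (fun u : ℝ => u ^ (β + k - 1) * exp (-(c * u))) (Ioi 0) := by
    refine (integrableOn_rpow_mul_exp_neg_mul_rpow (s := β + k - 1) (p := 1)
      (by linarith [k.cast_nonneg (α := ℝ)]) one_pos hc).congr_fun (fun u _ => ?_) measurableSet_Ioi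
    simp only [rpow_one, neg_mul]
  exact IntegrableOn.congr_fun (hexp.const_mul (r * d ^ k))
    (rpow_mul_exp_neg_mul_mul_pow_eqOn β c r d k).symm measurableSet_Ioi

lemma integral_rpow_mul_exp_neg_mul_mul_pow {β c : ℝ} (hβ : 0 < β) (hc : 0 < c) (r d : ℝ)
    (k : ℕ) :
    ∫ u in Ioi (0 : ℝ), u ^ (β - 1) * exp (-(c * u)) * (r * (d * u) ^ k) =
      Gamma β * c ^ (-β) * (r * risingFactorial β k * (d / c) ^ k) := by
  rw [setIntegral_congr_fun measurableSet_Ioi (rpow_mul_exp_neg_mul_mul_pow_eqOn β c r d k),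
    integral_const_mul, integral_rpow_mul_exp_neg_mul_Ioi (by positivity) hc,
    Gamma_add_natCast_eq_mul_risingFactorial (fun n => by positivity), rpow_add (by positivity),
    rpow_natCast, one_div, inv_rpow hc.le, ← rpow_neg hc.le, div_pow, div_eq_mul_inv _ (c ^ k),
    inv_pow]
  ring

lemma integral_norm_rpow_mul_exp_neg_mul_mul_pow {β c : ℝ} (hβ : 0 < β) (hc : 0 < c)
    (r d : ℝ) (k : ℕ) :
    ∫ u in Ioi (0 : ℝ), ‖u ^ (β - 1) * exp (-(c * u)) * (r * (d * u) ^ k)‖ =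
      Gamma β * c ^ (-β) * (|r| * risingFactorial β k * (|d| / c) ^ k) := by
  rw [← integral_rpow_mul_exp_neg_mul_mul_pow hβ hc]
  refine setIntegral_congr_fun measurableSet_Ioi fun u (hu : 0 < u) => ?_
  simp only [Real.norm_eq_abs, abs_mul, abs_pow, abs_of_pos hu, abs_of_pos (exp_pos _),
    abs_of_pos (rpow_pos_of_pos hu _)]

theorem stmt_7_general (α β c d : ℝ) (hβ : 0 < β) (hc : 0 < c) (hd : |d| < c) :
    ∫ u in Set.Ioi (0 : ℝ), u ^ (β - 1) * Real.exp (-(c * u)) * kummer1F1 α (d * u) =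
      Real.Gamma β * c ^ (-β) * gauss2F1 α β (d / c) := by
  set r : ℕ → ℝ := fun k => risingFactorial α k / (k ! : ℝ) ^ 2
  set F : ℕ → ℝ → ℝ := fun k u => u ^ (β - 1) * exp (-(c * u)) * (r k * (d * u) ^ k)
  have hdc : |d / c| < 1 := by rwa [abs_div, abs_of_pos hc, div_lt_one hc]
  have hF_summable : Summable fun k => ∫ u in Ioi (0 : ℝ), ‖F k u‖ := by
    refine ((summable_norm_gauss2F1_series α β hdc).mul_left (Gamma β * c ^ (-β))).congr
      fun k => ?_
    rw [integral_norm_rpow_mul_exp_neg_mul_mul_pow hβ hc]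
    simp only [r, Real.norm_eq_abs, abs_mul, abs_div, abs_pow, abs_of_pos hc,
      abs_of_pos (risingFactorial_pos hβ k), Nat.abs_cast]
    ring
  calc ∫ u in Ioi (0 : ℝ), u ^ (β - 1) * exp (-(c * u)) * kummer1F1 α (d * u)
      = ∫ u in Ioi (0 : ℝ), ∑' k, F k u := by simp only [F, r, kummer1F1, ← tsum_mul_left]
    _ = ∑' k, ∫ u in Ioi (0 : ℝ), F k u := (integral_tsum_of_summable_integral_norm
          (fun k => integrableOn_rpow_mul_exp_neg_mul_mul_pow hβ hc _ _ k) hF_summable).symm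
    _ = ∑' k, Gamma β * c ^ (-β) * (r k * risingFactorial β k * (d / c) ^ k) :=
          tsum_congr fun k => integral_rpow_mul_exp_neg_mul_mul_pow hβ hc _ _ k
    _ = Gamma β * c ^ (-β) * gauss2F1 α β (d / c) := by
          rw [gauss2F1, ← tsum_mul_left]
          simp only [r, mul_div_right_comm]

theorem stmt_7 (α β c d : ℝ) (hα : 0 < α) (hβ : 0 < β) (hc : 0 < c) (hd : |d| < c) :
    ∫ u in Set.Ioi (0 : ℝ), u ^ (β - 1) * Real.exp (-(c * u)) * kummer1F1 α (d * u) =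
      Real.Gamma β * c ^ (-β) * gauss2F1 α β (d / c) :=
  stmt_7_general α β c d hβ hc hd
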